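/- (Corollary 1) Let T be a linear map on d × d complex matrices such that ρ := (id ⊗ T)(|ψ⟩⟨ψ|) is positive semidefinite with trace 1 (as holds for any completely positive trace-preserving map T), and such that T maps positive semidefinite matrices to positive semidefinite matrices. Then the entanglement fidelity F(ψ; T)² := tr(|ψ⟩⟨ψ| · (id ⊗ T)(|ψ⟩⟨ψ|)) satisfies F(ψ; T)² ≥ Σ_{j=1}^d λ_j F(e_j; T)² + (1/d) Σ_{α=1}^d F(ψ_α; T)² − 1, where for a unit vector φ ∈ ℂ^d, F(φ; T)² := ⟨φ| T(|φ⟩⟨φ|) |φ⟩. -/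

import Mathlib

open Matrix Kronecker
open scoped BigOperators ComplexOrder

noncomputable section

/-- Standard basis vector `e_j` of `ℂ^d`. -/
def eVec (d : ℕ) (j : Fin d) : Fin d → ℂ := fun k => if k = j then 1 else 0

/-- Elementary tensor of two vectors in `ℂ^d`. -/
def tensorVec {d : ℕ} (v w : Fin d → ℂ) : Fin d × Fin d → ℂ := fun p => v p.1 * w p.2

/-- Outer product `|v⟩⟨w|`. -/
def outer {n : Type*} (v w : n → ℂ) : Matrix n n ℂ := Matrix.vecMulVec v (star w)

/-- Conjugate (mutually unbiased) basis vectors `â_α`. -/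
def ahat (d : ℕ) (phi : Fin d → Fin d → ℝ) (α : Fin d) : Fin d → ℂ :=
  fun j => ((1 / Real.sqrt d : ℝ) : ℂ) * Complex.exp (Complex.I * (phi j α : ℂ))

/-- The unit vectors `ψ_α = Σ_j √λ_j e^{-iφ(j,α)} e_j`. -/
def psiAlpha (d : ℕ) (lam : Fin d → ℝ) (phi : Fin d → Fin d → ℝ) (α : Fin d) : Fin d → ℂ :=
  fun j => ((Real.sqrt (lam j) : ℝ) : ℂ) * Complex.exp (-Complex.I * (phi j α : ℂ))

/-- The Schmidt-form state `ψ = Σ_j √λ_j e_j ⊗ e_j` in `ℂ^d ⊗ ℂ^d`. -/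
def psiVec (d : ℕ) (lam : Fin d → ℝ) : Fin d × Fin d → ℂ :=
  ∑ j, ((Real.sqrt (lam j) : ℝ) : ℂ) • tensorVec (eVec d j) (eVec d j)

/-- The projector `P = Σ_j |e_j⟩⟨e_j| ⊗ |e_j⟩⟨e_j|`. -/
def Pop (d : ℕ) : Matrix (Fin d × Fin d) (Fin d × Fin d) ℂ :=
  ∑ j, (outer (eVec d j) (eVec d j)) ⊗ₖ (outer (eVec d j) (eVec d j))

/-- The projector `Q = Σ_α |â_α⟩⟨â_α| ⊗ |ψ_α⟩⟨ψ_α|`. -/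
def Qop (d : ℕ) (lam : Fin d → ℝ) (phi : Fin d → Fin d → ℝ) :
    Matrix (Fin d × Fin d) (Fin d × Fin d) ℂ :=
  ∑ α, (outer (ahat d phi α) (ahat d phi α)) ⊗ₖ
      (outer (psiAlpha d lam phi α) (psiAlpha d lam phi α))

/-- The map `id ⊗ T` on operators on `ℂ^d ⊗ ℂ^d`, acting as the identity on the
first tensor factor and as `T` on the second; on product operators it satisfies
`(id ⊗ T)(A ⊗ B) = A ⊗ T(B)`. -/
def idTensor {d : ℕ} (T : Matrix (Fin d) (Fin d) ℂ →ₗ[ℂ] Matrix (Fin d) (Fin d) ℂ)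
    (M : Matrix (Fin d × Fin d) (Fin d × Fin d) ℂ) :
    Matrix (Fin d × Fin d) (Fin d × Fin d) ℂ :=
  Matrix.of fun p q => T (Matrix.of fun k l => M (p.1, k) (q.1, l)) p.2 q.2

/-- The ensemble fidelity `F(φ;T)² = ⟨φ|T(|φ⟩⟨φ|)|φ⟩` for a vector `φ ∈ ℂ^d`. -/
def ensFid {d : ℕ} (T : Matrix (Fin d) (Fin d) ℂ →ₗ[ℂ] Matrix (Fin d) (Fin d) ℂ)
    (v : Fin d → ℂ) : ℂ :=
  star v ⬝ᵥ (T (outer v v)).mulVec v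

/-! The projections `P = Σ_j |e_j e_j⟩⟨e_j e_j|` (`Pop`) and `Q = Σ_α |â_α ψ_α⟩⟨â_α ψ_α|` (`Qop`)
commute, with `P Q = |ψ⟩⟨ψ|`: this is where the completeness of the basis `â` enters. Hence
`(1 - P)(1 - Q)` is again a projection, so `tr((1 - P)(1 - Q) ρ) ≥ 0`, that is
`tr(|ψ⟩⟨ψ| ρ) ≥ tr(P ρ) + tr(Q ρ) - tr ρ`. Finally `tr(P ρ) = Σ_j λ_j F(e_j;T)²` and
`tr(Q ρ) = (1/d) Σ_α F(ψ_α;T)²`, because contracting `(id ⊗ T)(|ψ⟩⟨ψ|)` against `|a⟩⟨a| ⊗ B` gives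
`tr(B T(|w⟩⟨w|))` with `w_k = conj(a_k) √λ_k`. -/

section Projections

variable {n : Type*} [Fintype n]

omit [Fintype n] in
lemma isSelfAdjoint_outer (v : n → ℂ) : IsSelfAdjoint (outer v v) := by
  simp [IsSelfAdjoint, outer, Matrix.star_eq_conjTranspose]

lemma outer_mul_outer (u v w x : n → ℂ) :
    outer u v * outer w x = (star v ⬝ᵥ w) • outer u x := by
  rw [outer, outer, vecMulVec_mul_vecMulVec, outer, vecMulVec_smul]

lemma trace_outer_mul (v : n → ℂ) (M : Matrix n n ℂ) :
    (outer v v * M).trace = star v ⬝ᵥ M *ᵥ v := by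
  rw [outer, vecMulVec_mul, trace_vecMulVec, dotProduct_comm, dotProduct_mulVec]

lemma isStarProjection_sum_outer {ι : Type*} [Fintype ι] [DecidableEq ι] {u : ι → n → ℂ}
    (hu : ∀ i j, star (u i) ⬝ᵥ u j = if i = j then 1 else 0) :
    IsStarProjection (∑ i, outer (u i) (u i)) where
  isSelfAdjoint := isSelfAdjoint_sum _ fun i _ => isSelfAdjoint_outer (u i)
  isIdempotentElem := by
    simp [IsIdempotentElem, Finset.sum_mul_sum, outer_mul_outer, hu]

lemma IsStarProjection.trace_mul_nonneg {M ρ : Matrix n n ℂ} (hM : IsStarProjection M)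
    (hρ : ρ.PosSemidef) : 0 ≤ (M * ρ).trace := by
  have h := (hρ.conjTranspose_mul_mul_same M).trace_nonneg
  rwa [← Matrix.star_eq_conjTranspose, hM.isSelfAdjoint.star_eq, Matrix.mul_assoc,
    trace_mul_comm, Matrix.mul_assoc, hM.isIdempotentElem.eq, trace_mul_comm] at h

variable [DecidableEq n]

theorem trace_mul_add_trace_mul_sub_trace_le {P Q ρ : Matrix n n ℂ} (hP : IsStarProjection P)
    (hQ : IsStarProjection Q) (hPQ : Commute P Q) (hρ : ρ.PosSemidef) :
    (P * ρ).trace + (Q * ρ).trace - ρ.trace ≤ (P * Q * ρ).trace := by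
  have hcomm : Commute (1 - P) (1 - Q) :=
    (Commute.one_right _).sub_right ((Commute.one_left Q).sub_left hPQ)
  have h := (hP.one_sub.mul hQ.one_sub hcomm).trace_mul_nonneg hρ
  have hexp : (1 - P) * (1 - Q) * ρ = ρ - P * ρ - Q * ρ + P * Q * ρ := by noncomm_ring
  rw [hexp, trace_add, trace_sub, trace_sub] at h
  linear_combination h

lemma sum_mul_star_of_orthonormal {R : Type*} [CommRing R] [StarRing R] {u : n → n → R}
    (hu : ∀ i j, star (u i) ⬝ᵥ u j = if i = j then 1 else 0) (a b : n) :
    ∑ i, u i a * star (u i b) = if a = b then 1 else 0 := by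
  let U : Matrix n n R := Matrix.of fun a i => u i a
  have hU : Uᴴ * U = 1 := by
    ext i j
    simpa [U, Matrix.mul_apply, dotProduct, Matrix.one_apply] using hu i j
  have hU' : U * Uᴴ = 1 := mul_eq_one_comm.mp hU
  simpa [U, Matrix.mul_apply, Matrix.one_apply] using congrArg (fun M => M a b) hU'

end Projections

section TensorVec

variable {d : ℕ}

lemma outer_kronecker_outer (a b c e : Fin d → ℂ) :
    outer a b ⊗ₖ outer c e = outer (tensorVec a c) (tensorVec b e) := by
  ext p q
  simp only [outer, kroneckerMap_apply, vecMulVec_apply, tensorVec, Pi.star_apply, star_mul']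
  ring

lemma star_tensorVec_dotProduct (a b c e : Fin d → ℂ) :
    star (tensorVec a b) ⬝ᵥ tensorVec c e = (star a ⬝ᵥ c) * (star b ⬝ᵥ e) := by
  simp only [dotProduct, Fintype.sum_prod_type, Finset.sum_mul_sum, tensorVec, Pi.star_apply,
    star_mul']
  exact Finset.sum_congr rfl fun _ _ => Finset.sum_congr rfl fun _ _ => by ring

lemma star_tensorVec_dotProduct_of_orthonormal {ι : Type*} [DecidableEq ι]
    {a b : ι → Fin d → ℂ} (ha : ∀ i j, star (a i) ⬝ᵥ a j = if i = j then 1 else 0)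
    (hb : ∀ i, star (b i) ⬝ᵥ b i = 1) (i j : ι) :
    star (tensorVec (a i) (b i)) ⬝ᵥ tensorVec (a j) (b j) = if i = j then 1 else 0 := by
  rw [star_tensorVec_dotProduct, ha]
  split_ifs with h
  · rw [h, hb, one_mul]
  · rw [zero_mul]

lemma star_eVec_dotProduct (j : Fin d) (v : Fin d → ℂ) : star (eVec d j) ⬝ᵥ v = v j := by
  simp [eVec, dotProduct]

lemma psiVec_apply (lam : Fin d → ℝ) (k l : Fin d) :
    psiVec d lam (k, l) = if k = l then ((Real.sqrt (lam k) : ℝ) : ℂ) else 0 := by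
  rcases eq_or_ne k l with rfl | h <;> simp [psiVec, tensorVec, eVec, Finset.sum_apply, *]

end TensorVec

section Vectors

variable {d : ℕ} {lam : Fin d → ℝ} {phi : Fin d → Fin d → ℝ}

lemma star_psiAlpha_dotProduct_self (hlam : ∀ j, 0 ≤ lam j) (hsum : ∑ j, lam j = 1) (α : Fin d) :
    star (psiAlpha d lam phi α) ⬝ᵥ psiAlpha d lam phi α = 1 := by
  have hterm : ∀ j, star (psiAlpha d lam phi α j) * psiAlpha d lam phi α j = (lam j : ℂ) := by
    intro j
    rw [RCLike.star_def, Complex.conj_mul', psiAlpha, norm_mul, Complex.norm_real,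
      show -Complex.I * (phi j α : ℂ) = ((-phi j α : ℝ) : ℂ) * Complex.I by push_cast; ring,
      Complex.norm_exp_ofReal_mul_I, mul_one, Real.norm_of_nonneg (Real.sqrt_nonneg _),
      ← Complex.ofReal_pow, Real.sq_sqrt (hlam j)]
  simp only [dotProduct, Pi.star_apply, hterm]
  exact_mod_cast hsum

lemma star_ahat_mul_sqrt (α j : Fin d) :
    star (ahat d phi α j) * (Real.sqrt (lam j) : ℂ) =
      ((1 / Real.sqrt d : ℝ) : ℂ) * psiAlpha d lam phi α j := by
  rw [ahat, psiAlpha, star_mul', Complex.star_def, Complex.conj_ofReal,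
    ← Complex.exp_conj, map_mul, Complex.conj_I, Complex.conj_ofReal]
  ring

lemma ahat_mul_psiAlpha (α j : Fin d) :
    ahat d phi α j * psiAlpha d lam phi α j =
      ((1 / Real.sqrt d : ℝ) : ℂ) * (Real.sqrt (lam j) : ℂ) := by
  have h : Complex.exp (Complex.I * phi j α) * Complex.exp (-Complex.I * phi j α) = 1 := by
    rw [← Complex.exp_add, neg_mul, add_neg_cancel, Complex.exp_zero]
  rw [ahat, psiAlpha]
  linear_combination (((1 / Real.sqrt d : ℝ) : ℂ) * (Real.sqrt (lam j) : ℂ)) * h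

lemma sum_smul_tensorVec_ahat_psiAlpha (hd : 1 ≤ d)
    (hMUB : ∀ α β, star (ahat d phi α) ⬝ᵥ ahat d phi β = if α = β then 1 else 0) :
    ∑ α, ((1 / Real.sqrt d : ℝ) : ℂ) • tensorVec (ahat d phi α) (psiAlpha d lam phi α) =
      psiVec d lam := by
  have hsqrt : ((1 / Real.sqrt d : ℝ) : ℂ) * (Real.sqrt d : ℂ) = 1 := by
    rw [← Complex.ofReal_mul, one_div_mul_cancel (by positivity), Complex.ofReal_one]
  have hψ : ∀ α l, psiAlpha d lam phi α l =
      (Real.sqrt d : ℂ) * (star (ahat d phi α l) * (Real.sqrt (lam l) : ℂ)) := by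
    intro α l
    rw [star_ahat_mul_sqrt, ← mul_assoc, mul_comm (Real.sqrt d : ℂ), hsqrt, one_mul]
  ext ⟨k, l⟩
  calc (∑ α, ((1 / Real.sqrt d : ℝ) : ℂ) • tensorVec (ahat d phi α) (psiAlpha d lam phi α)) (k, l)
      = (∑ α, ahat d phi α k * star (ahat d phi α l)) * (Real.sqrt (lam l) : ℂ) := by
        simp only [Finset.sum_apply, Pi.smul_apply, tensorVec, smul_eq_mul, hψ, Finset.sum_mul]
        refine Finset.sum_congr rfl fun α _ => ?_
        linear_combination
          (ahat d phi α k * star (ahat d phi α l) * (Real.sqrt (lam l) : ℂ)) * hsqrt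
    _ = psiVec d lam (k, l) := by
        rw [sum_mul_star_of_orthonormal hMUB, psiVec_apply]
        split_ifs with h <;> simp [h]

end Vectors

section PopQop

variable {d : ℕ} {lam : Fin d → ℝ} {phi : Fin d → Fin d → ℝ}

lemma Pop_eq_sum_outer : Pop d =
    ∑ j, outer (tensorVec (eVec d j) (eVec d j)) (tensorVec (eVec d j) (eVec d j)) := by
  simp only [Pop, outer_kronecker_outer]

lemma Qop_eq_sum_outer : Qop d lam phi =
    ∑ α, outer (tensorVec (ahat d phi α) (psiAlpha d lam phi α))
      (tensorVec (ahat d phi α) (psiAlpha d lam phi α)) := by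
  simp only [Qop, outer_kronecker_outer]

lemma isStarProjection_Pop : IsStarProjection (Pop d) := by
  have he : ∀ i j, star (eVec d i) ⬝ᵥ eVec d j = if i = j then 1 else 0 := by
    simp [star_eVec_dotProduct, eVec]
  rw [Pop_eq_sum_outer]
  exact isStarProjection_sum_outer
    (star_tensorVec_dotProduct_of_orthonormal he fun j => by simp [he])

lemma isStarProjection_Qop (hlam : ∀ j, 0 ≤ lam j) (hsum : ∑ j, lam j = 1)
    (hMUB : ∀ α β, star (ahat d phi α) ⬝ᵥ ahat d phi β = if α = β then 1 else 0) :
    IsStarProjection (Qop d lam phi) := by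
  rw [Qop_eq_sum_outer]
  exact isStarProjection_sum_outer (star_tensorVec_dotProduct_of_orthonormal hMUB
    (star_psiAlpha_dotProduct_self hlam hsum))

lemma Pop_mul_Qop (hd : 1 ≤ d)
    (hMUB : ∀ α β, star (ahat d phi α) ⬝ᵥ ahat d phi β = if α = β then 1 else 0) :
    Pop d * Qop d lam phi = outer (psiVec d lam) (psiVec d lam) := by
  ext p q
  rw [outer, vecMulVec_apply, Pi.star_apply]
  nth_rw 2 [← sum_smul_tensorVec_ahat_psiAlpha hd hMUB]
  rw [Pop_eq_sum_outer, Qop_eq_sum_outer, Finset.sum_mul_sum]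
  unfold psiVec
  simp only [outer_mul_outer, star_tensorVec_dotProduct, star_eVec_dotProduct, ahat_mul_psiAlpha]
  simp only [Matrix.sum_apply, Finset.sum_apply, star_sum, Finset.sum_mul_sum, Matrix.smul_apply,
    Pi.smul_apply, outer, vecMulVec_apply, Pi.star_apply, smul_eq_mul, star_mul',
    Complex.star_def, Complex.conj_ofReal]
  refine Finset.sum_congr rfl fun j _ => Finset.sum_congr rfl fun α _ => ?_
  ring

end PopQop

section Traces

variable {d : ℕ}

lemma trace_kronecker_outer_mul_idTensor
    (T : Matrix (Fin d) (Fin d) ℂ →ₗ[ℂ] Matrix (Fin d) (Fin d) ℂ) (a : Fin d → ℂ)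
    (B : Matrix (Fin d) (Fin d) ℂ) (v : Fin d × Fin d → ℂ) :
    ((outer a a ⊗ₖ B) * idTensor T (outer v v)).trace =
      (B * T (outer (fun k => ∑ i, star (a i) * v (i, k))
        (fun k => ∑ i, star (a i) * v (i, k)))).trace := by
  set X : Fin d → Fin d → Matrix (Fin d) (Fin d) ℂ :=
    fun i j => Matrix.of fun k l => outer v v (i, k) (j, l)
  have hw : outer (fun k => ∑ i, star (a i) * v (i, k)) (fun k => ∑ i, star (a i) * v (i, k)) =
      ∑ i, ∑ j, (star (a i) * a j) • X i j := by
    ext k l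
    simp only [X, outer, vecMulVec_apply, Pi.star_apply, star_sum, Finset.sum_mul_sum, star_mul',
      star_star, Matrix.sum_apply, Matrix.smul_apply, Matrix.of_apply, smul_eq_mul]
    exact Finset.sum_congr rfl fun _ _ => Finset.sum_congr rfl fun _ _ => by ring
  rw [hw]
  simp only [map_sum, LinearMap.map_smul, trace, diag, mul_apply, Fintype.sum_prod_type,
    kroneckerMap_apply, idTensor, Matrix.of_apply, Matrix.sum_apply, Matrix.smul_apply, smul_eq_mul,
    outer, vecMulVec_apply, Pi.star_apply, Finset.mul_sum]
  rw [Finset.sum_comm]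
  refine Finset.sum_congr rfl fun k _ => ?_
  rw [Finset.sum_comm_cycle]
  refine Finset.sum_congr rfl fun l _ => ?_
  rw [Finset.sum_comm]
  refine Finset.sum_congr rfl fun i _ => Finset.sum_congr rfl fun j _ => ?_
  simp only [X, outer, vecMulVec_apply, Pi.star_apply]
  ring

lemma trace_outer_mul_outer_smul (T : Matrix (Fin d) (Fin d) ℂ →ₗ[ℂ] Matrix (Fin d) (Fin d) ℂ)
    (c : ℝ) (v : Fin d → ℂ) :
    (outer v v * T (outer ((c : ℂ) • v) ((c : ℂ) • v))).trace = ((c ^ 2 : ℝ) : ℂ) * ensFid T v := by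
  have h : outer ((c : ℂ) • v) ((c : ℂ) • v) = ((c ^ 2 : ℝ) : ℂ) • outer v v := by
    rw [outer, star_smul, smul_vecMulVec, vecMulVec_smul, smul_smul, Complex.star_def,
      Complex.conj_ofReal, outer, Complex.ofReal_pow, sq]
  rw [h, map_smul, Matrix.mul_smul, trace_smul, trace_outer_mul, ensFid, smul_eq_mul]

variable {lam : Fin d → ℝ}

lemma sum_star_mul_psiVec (a : Fin d → ℂ) :
    (fun k => ∑ i, star (a i) * psiVec d lam (i, k)) = fun k => star (a k) * Real.sqrt (lam k) := by
  funext k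
  simp [psiVec_apply]

lemma trace_Pop_mul_idTensor (hlam : ∀ j, 0 ≤ lam j)
    (T : Matrix (Fin d) (Fin d) ℂ →ₗ[ℂ] Matrix (Fin d) (Fin d) ℂ) :
    (Pop d * idTensor T (outer (psiVec d lam) (psiVec d lam))).trace =
      ∑ j, (lam j : ℂ) * ensFid T (eVec d j) := by
  rw [Pop, Finset.sum_mul, trace_sum]
  refine Finset.sum_congr rfl fun j _ => ?_
  have hw : (fun k => star (eVec d j k) * Real.sqrt (lam k)) =
      (Real.sqrt (lam j) : ℂ) • eVec d j := by
    funext k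
    by_cases h : k = j <;> simp [eVec, h]
  rw [trace_kronecker_outer_mul_idTensor, sum_star_mul_psiVec, hw, trace_outer_mul_outer_smul,
    Real.sq_sqrt (hlam j)]

lemma trace_Qop_mul_idTensor {phi : Fin d → Fin d → ℝ}
    (T : Matrix (Fin d) (Fin d) ℂ →ₗ[ℂ] Matrix (Fin d) (Fin d) ℂ) :
    (Qop d lam phi * idTensor T (outer (psiVec d lam) (psiVec d lam))).trace =
      ∑ α, ((1 / d : ℝ) : ℂ) * ensFid T (psiAlpha d lam phi α) := by
  rw [Qop, Finset.sum_mul, trace_sum]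
  refine Finset.sum_congr rfl fun α _ => ?_
  have hw : (fun k => star (ahat d phi α k) * Real.sqrt (lam k)) =
      ((1 / Real.sqrt d : ℝ) : ℂ) • psiAlpha d lam phi α := by
    funext k
    exact star_ahat_mul_sqrt α k
  rw [trace_kronecker_outer_mul_idTensor, sum_star_mul_psiVec, hw, trace_outer_mul_outer_smul,
    div_pow, one_pow, Real.sq_sqrt (Nat.cast_nonneg d)]

end Traces

theorem stmt10_general (d : ℕ) (hd : 1 ≤ d) (lam : Fin d → ℝ)
    (hlam : ∀ j, 0 ≤ lam j) (hsum : ∑ j, lam j = 1)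
    (phi : Fin d → Fin d → ℝ)
    (hMUB : ∀ α β : Fin d,
      star (ahat d phi α) ⬝ᵥ ahat d phi β = if α = β then 1 else 0)
    (T : Matrix (Fin d) (Fin d) ℂ →ₗ[ℂ] Matrix (Fin d) (Fin d) ℂ)
    (hρ : (idTensor T (outer (psiVec d lam) (psiVec d lam))).PosSemidef)
    (hρtr : (idTensor T (outer (psiVec d lam) (psiVec d lam))).trace = 1) :
    (outer (psiVec d lam) (psiVec d lam) *
        idTensor T (outer (psiVec d lam) (psiVec d lam))).trace.re ≥
      (∑ j, lam j * (ensFid T (eVec d j)).re)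
      + (1 / (d : ℝ)) * (∑ α, (ensFid T (psiAlpha d lam phi α)).re)
      - 1 := by
  have hP := isStarProjection_Pop (d := d)
  have hQ := isStarProjection_Qop hlam hsum hMUB
  have hPQ := Pop_mul_Qop (lam := lam) hd hMUB
  have hcomm : Commute (Pop d) (Qop d lam phi) :=
    (hP.isSelfAdjoint.commute_iff hQ.isSelfAdjoint).mpr (hPQ ▸ isSelfAdjoint_outer _)
  have key := trace_mul_add_trace_mul_sub_trace_le hP hQ hcomm hρ
  rw [hPQ, hρtr, trace_Pop_mul_idTensor hlam, trace_Qop_mul_idTensor] at key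
  have key_re := (Complex.le_def.mp key).1
  simp only [Complex.sub_re, Complex.add_re, Complex.one_re, Complex.re_sum,
    Complex.re_ofReal_mul] at key_re
  rw [Finset.mul_sum]
  linarith

/-- Corollary 1: the entanglement fidelity of `T` with respect to `ψ`
is bounded below by the ensemble fidelities,
`F(ψ;T)² ≥ Σ_j λ_j F(e_j;T)² + (1/d) Σ_α F(ψ_α;T)² − 1`. -/
theorem stmt10 (d : ℕ) (hd : 1 ≤ d) (lam : Fin d → ℝ)
    (hlam : ∀ j, 0 ≤ lam j) (hsum : ∑ j, lam j = 1)
    (phi : Fin d → Fin d → ℝ)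
    (hMUB : ∀ α β : Fin d,
      star (ahat d phi α) ⬝ᵥ ahat d phi β = if α = β then 1 else 0)
    (T : Matrix (Fin d) (Fin d) ℂ →ₗ[ℂ] Matrix (Fin d) (Fin d) ℂ)
    (hρ : (idTensor T (outer (psiVec d lam) (psiVec d lam))).PosSemidef)
    (hρtr : (idTensor T (outer (psiVec d lam) (psiVec d lam))).trace = 1)
    (hTpos : ∀ A : Matrix (Fin d) (Fin d) ℂ, A.PosSemidef → (T A).PosSemidef) :
    (outer (psiVec d lam) (psiVec d lam) *
        idTensor T (outer (psiVec d lam) (psiVec d lam))).trace.re ≥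
      (∑ j, lam j * (ensFid T (eVec d j)).re)
      + (1 / (d : ℝ)) * (∑ α, (ensFid T (psiAlpha d lam phi α)).re)
      - 1 :=
  stmt10_general d hd lam hlam hsum phi hMUB T hρ hρtr
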